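/- Fix real numbers T > 0, M > 0, λ > 0 and a0 > 0, and fix a parameter a ∈ [0,M]. Then there exists a constant C > 0 such that for all s ≥ 1 and all t ∈ (0,T): |d/dt ( e^{−2 s α_a(t) − 2 a0 s α*(t)} · ξ_a(t)³ )| ≤ C · T · s · e^{−2 s α_a(t) − 2 a0 s α*(t)} · ξ_a(t)^{21/5}. -/

import Mathlib

/-- The Carleman weight `α_a(t) = (e^{12λM} − e^{λ(10M+a)})/(t(T−t))⁵`, where
`a ∈ [0,M]` plays the role of the value `η(x)`. -/
noncomputable def alphaA (T M lam a t : ℝ) : ℝ :=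
  (Real.exp (12 * lam * M) - Real.exp (lam * (10 * M + a))) / (t * (T - t)) ^ 5

/-- The Carleman weight `ξ_a(t) = e^{λ(10M+a)}/(t(T−t))⁵`. -/
noncomputable def xiA (T M lam a t : ℝ) : ℝ :=
  Real.exp (lam * (10 * M + a)) / (t * (T - t)) ^ 5

/-- The Carleman weight `α*(t) = α_0(t) = (e^{12λM} − e^{10λM})/(t(T−t))⁵`. -/
noncomputable def alphaStar (T M lam t : ℝ) : ℝ :=
  (Real.exp (12 * lam * M) - Real.exp (10 * lam * M)) / (t * (T - t)) ^ 5

/-!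
With `x = t(T−t)` one has `0 < x ≤ T²/4` and `|x'| = |T − 2t| ≤ T`. The exponent
`−2sα_a − 2a₀sα*` is `s k / x⁵` for a constant `k`, and `ξ_a = c / x⁵`, so the weight is
`exp (s k / x⁵) c³ / x¹⁵`, with derivative `−5 x' exp (s k / x⁵) c³ (s k + 3x⁵) / x²¹`.
The exponential factor is the same on both sides and `x⁻²¹ = ξ_a^{21/5} / c^{21/5}`, so it
remains to bound `|s k + 3x⁵| ≤ s (|k| + 3 (T²/4)⁵)` for `s ≥ 1`.
-/

open Real Set

theorem hasDerivAt_mul_sub (T t : ℝ) : HasDerivAt (fun u => u * (T - u)) (T - 2 * t) t :=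
  ((hasDerivAt_id' t).fun_mul ((hasDerivAt_const t T).fun_sub (hasDerivAt_id' t))).congr_deriv
    (by ring)

theorem hasDerivAt_exp_div_pow_mul_div_pow_cube {h : ℝ → ℝ} {h' t : ℝ} (K c : ℝ) (n : ℕ)
    (hh : HasDerivAt h h' t) (ht : h t ≠ 0) :
    HasDerivAt (fun u => exp (K / h u ^ n) * (c / h u ^ n) ^ 3)
      (-n * h' * exp (K / h t ^ n) * c ^ 3 * (K + 3 * h t ^ n) / h t ^ (4 * n + 1)) t := by
  have hn : h t ^ n ≠ 0 := pow_ne_zero n ht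
  refine (((hasDerivAt_const t K).fun_div (hh.fun_pow n) hn).exp.fun_mul
    (((hasDerivAt_const t c).fun_div (hh.fun_pow n) hn).fun_pow 3)).congr_deriv ?_
  rcases n with _ | n
  · simp
  · rw [Nat.add_sub_cancel, show 4 * (n + 1) + 1 = 4 * n + 5 by ring, pow_add (h t) (4 * n),
      pow_mul', pow_succ]
    have hx := pow_ne_zero n ht
    generalize h t ^ n = x at hx ⊢
    simp only [Nat.reduceSub, Nat.cast_ofNat, zero_mul, zero_sub]
    field_simp
    ring

theorem div_pow_rpow_div {c x : ℝ} (hc : 0 ≤ c) (hx : 0 ≤ x) {n : ℕ} (hn : n ≠ 0) (m : ℕ) :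
    (c / x ^ n) ^ ((m : ℝ) / n) = c ^ ((m : ℝ) / n) / x ^ m := by
  rw [div_rpow hc (by positivity), ← rpow_natCast x n, ← rpow_mul hx,
    mul_div_cancel₀ _ (Nat.cast_ne_zero.mpr hn), rpow_natCast]

theorem abs_weight_deriv_le {n : ℕ} {h' x X T s k c E : ℝ} (hx : 0 < x) (hxX : x ≤ X)
    (hh' : |h'| ≤ T) (hs : 1 ≤ s) (hc : 0 ≤ c) (hE : 0 ≤ E) :
    |-n * h' * E * c ^ 3 * (s * k + 3 * x ^ n) / x ^ (4 * n + 1)|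
      ≤ n * c ^ 3 * (|k| + 3 * X ^ n) * T * s * E / x ^ (4 * n + 1) := by
  have hX : 0 ≤ 3 * X ^ n := by have := hx.le.trans hxX; positivity
  have hT : 0 ≤ T := (abs_nonneg h').trans hh'
  have hsum : |s * k + 3 * x ^ n| ≤ s * (|k| + 3 * X ^ n) :=
    calc |s * k + 3 * x ^ n| ≤ s * |k| + 3 * x ^ n := by
          refine (abs_add_le _ _).trans_eq ?_
          rw [abs_mul, abs_of_pos (a := s) (by linarith),
            abs_of_pos (a := 3 * x ^ n) (by positivity)]
      _ ≤ s * |k| + s * (3 * X ^ n) := by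
          have : 3 * x ^ n ≤ 3 * X ^ n := by gcongr
          linarith [le_mul_of_one_le_left hX hs]
      _ = s * (|k| + 3 * X ^ n) := by ring
  rw [abs_div, abs_of_pos (by positivity : (0 : ℝ) < x ^ (4 * n + 1))]
  gcongr
  rw [abs_mul, abs_mul, abs_mul, abs_mul, abs_neg, abs_of_nonneg hE, Nat.abs_cast,
    abs_of_nonneg (by positivity : (0 : ℝ) ≤ c ^ 3)]
  calc _ ≤ n * T * E * c ^ 3 * (s * (|k| + 3 * X ^ n)) := by gcongr
    _ = _ := by ring

theorem weight_exponent_eq (T M lam a0 a s u : ℝ) :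
    -2 * s * alphaA T M lam a u - 2 * a0 * s * alphaStar T M lam u
      = s * (-2 * ((exp (12 * lam * M) - exp (lam * (10 * M + a)))
          + a0 * (exp (12 * lam * M) - exp (10 * lam * M)))) / (u * (T - u)) ^ 5 := by
  unfold alphaA alphaStar
  ring

theorem weight_time_derivative_bound_general (T M lam a0 a : ℝ)
    (hT : 0 < T) :
    ∃ C > (0 : ℝ), ∀ s ≥ (1 : ℝ), ∀ t ∈ Set.Ioo (0 : ℝ) T,
      |deriv (fun u =>
          Real.exp (-2 * s * alphaA T M lam a u - 2 * a0 * s * alphaStar T M lam u)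
            * (xiA T M lam a u) ^ 3) t| ≤
        C * T * s *
          Real.exp (-2 * s * alphaA T M lam a t - 2 * a0 * s * alphaStar T M lam t)
            * (xiA T M lam a t) ^ ((21 : ℝ) / 5) := by
  set k := -2 * ((exp (12 * lam * M) - exp (lam * (10 * M + a)))
    + a0 * (exp (12 * lam * M) - exp (10 * lam * M)))
  set c := exp (lam * (10 * M + a))
  have hc : 0 < c := exp_pos _
  refine ⟨5 * c ^ 3 * (|k| + 3 * (T ^ 2 / 4) ^ 5) / c ^ ((21 : ℝ) / 5), by positivity, ?_⟩
  intro s hs t ⟨ht0, htT⟩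
  have hx : 0 < t * (T - t) := mul_pos ht0 (sub_pos.mpr htT)
  have hxT : t * (T - t) ≤ T ^ 2 / 4 := by nlinarith [four_mul_le_sq_add t (T - t)]
  have hx' : |T - 2 * t| ≤ T := abs_le.mpr ⟨by linarith, by linarith⟩
  have hweight : (fun u => exp (-2 * s * alphaA T M lam a u - 2 * a0 * s * alphaStar T M lam u)
        * xiA T M lam a u ^ 3)
      = fun u => exp (s * k / (u * (T - u)) ^ 5) * (c / (u * (T - u)) ^ 5) ^ 3 := by
    funext u
    rw [weight_exponent_eq]
    rfl
  have hxi : xiA T M lam a t ^ ((21 : ℝ) / 5) = c ^ ((21 : ℝ) / 5) / (t * (T - t)) ^ 21 := by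
    simpa [xiA] using div_pow_rpow_div hc.le hx.le (n := 5) (by norm_num) 21
  have hexp : -2 * s * alphaA T M lam a t - 2 * a0 * s * alphaStar T M lam t
      = s * k / (t * (T - t)) ^ 5 := weight_exponent_eq T M lam a0 a s t
  rw [hweight, (hasDerivAt_exp_div_pow_mul_div_pow_cube _ c 5 (hasDerivAt_mul_sub T t)
    hx.ne').deriv, hexp, hxi]
  calc _ ≤ (5 : ℕ) * c ^ 3 * (|k| + 3 * (T ^ 2 / 4) ^ 5) * T * s
        * exp (s * k / (t * (T - t)) ^ 5) / (t * (T - t)) ^ (4 * 5 + 1) :=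
        abs_weight_deriv_le hx hxT hx' hs hc.le (exp_pos _).le
    _ = _ := by
      field_simp
      ring

/-- Time-derivative bound
`|∂_t (e^{−2sα − 2a0 sα*} ξ³)| ≤ C T s e^{−2sα − 2a0 sα*} ξ^{21/5}` used to
estimate the term `I₁` in the proof of Proposition 3.1 of the paper. -/
theorem weight_time_derivative_bound (T M lam a0 a : ℝ)
    (hT : 0 < T) (hM : 0 < M) (hlam : 0 < lam) (ha0 : 0 < a0)
    (ha : a ∈ Set.Icc (0 : ℝ) M) :
    ∃ C > (0 : ℝ), ∀ s ≥ (1 : ℝ), ∀ t ∈ Set.Ioo (0 : ℝ) T,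
      |deriv (fun u =>
          Real.exp (-2 * s * alphaA T M lam a u - 2 * a0 * s * alphaStar T M lam u)
            * (xiA T M lam a u) ^ 3) t| ≤
        C * T * s *
          Real.exp (-2 * s * alphaA T M lam a t - 2 * a0 * s * alphaStar T M lam t)
            * (xiA T M lam a t) ^ ((21 : ℝ) / 5) :=
  weight_time_derivative_bound_general T M lam a0 a hT
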